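/- arXiv:1502.05463 — 2 statements merged into one kernel-verified Lean document; each statement's English description precedes it below -/
import Mathlib

section
/- ∫_0^∞ ∫_0^∞ x³ y / (1 + x² + y² + x² y² + x⁴)^4 dx dy = (6 − √3 π)/108. -/
/-!
Since `1 + x² + y² + x²y² + x⁴ = (1 + x²) y² + (1 + x² + x⁴)`, the inner integral is elementary
and equals `x³ / (6 (1 + x²) (1 + x² + x⁴)³)`. In the variable `t = x²` the outer integrand is the
rational function `t / (12 (1 + t) (1 + t + t²)³)`, whose primitive `outerPrimitive` comes from
partial fractions. Its limit at infinity is that of the arctan term, `-√3 π / 72`; subtracting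
its value `-√3 π / 216 - 1 / 18` at `0` gives the result.
-/

open MeasureTheory Real Filter Topology Set

theorem integral_Ioi_mul_div_sq_add_pow {a b : ℝ} (ha : 0 < a) (hb : 0 < b) {n : ℕ}
    (hn : n ≠ 0) :
    ∫ y in Ioi 0, y / (a * y ^ 2 + b) ^ (n + 1) = 1 / (2 * n * a * b ^ n) := by
  have hden : Tendsto (fun y : ℝ => (a * y ^ 2 + b) ^ n) atTop atTop :=
    (tendsto_pow_atTop hn).comp <| tendsto_atTop_add_const_right _ b <|
      (tendsto_pow_atTop two_ne_zero).const_mul_atTop ha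
  have hderiv (y : ℝ) : HasDerivAt (fun y => -(2 * n * a)⁻¹ * ((a * y ^ 2 + b) ^ n)⁻¹)
      (y / (a * y ^ 2 + b) ^ (n + 1)) y := by
    have hpos : 0 < a * y ^ 2 + b := by positivity
    refine (((hasDerivAt_pow 2 y).const_mul a).add_const b).fun_pow n |>.fun_inv
      (pow_ne_zero n hpos.ne') |>.const_mul (-(2 * n * a)⁻¹) |>.congr_deriv ?_
    obtain ⟨m, rfl⟩ := Nat.exists_eq_add_one_of_ne_zero hn
    field_simp
    push_cast
    ring
  rw [integral_Ioi_of_hasDerivAt_of_nonneg' (fun y _ => hderiv y)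
    (fun y hy => by have : 0 < y := hy; positivity)
    (by simpa using (tendsto_inv_atTop_zero.comp hden).const_mul (-(2 * n * a)⁻¹))]
  rw [zero_pow two_ne_zero, mul_zero, zero_add]
  field_simp
  ring

lemma tendsto_atTop_of_eq_comp_inv {f g : ℝ → ℝ} (hg : ContinuousAt g 0)
    (hfg : ∀ t > 0, f t = g t⁻¹) : Tendsto f atTop (𝓝 (g 0)) :=
  (hg.tendsto.comp tendsto_inv_atTop_zero).congr' <|
    (eventually_gt_atTop 0).mono fun t ht => (hfg t ht).symm

noncomputable def outerPrimitive (t : ℝ) : ℝ :=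
  log ((1 + t + t ^ 2) / (1 + t) ^ 2) / 24 - √3 / 36 * arctan ((2 * t + 1) / √3)
    - 1 / (24 * (1 + t + t ^ 2)) + (t - 1) / (72 * (1 + t + t ^ 2) ^ 2)

lemma hasDerivAt_outerPrimitive {t : ℝ} (ht : -1 < t) :
    HasDerivAt outerPrimitive (t / (12 * (1 + t) * (1 + t + t ^ 2) ^ 3)) t := by
  have hq : 0 < 1 + t + t ^ 2 := by nlinarith [sq_nonneg (t + 1 / 2)]
  have hp : 0 < 1 + t := by linarith
  have hid : HasDerivAt (fun s : ℝ => s) 1 t := hasDerivAt_id' (x := t)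
  have hq' : HasDerivAt (fun t => 1 + t + t ^ 2) (1 + 2 * t) t := by
    simpa using (hid.const_add 1).fun_add (hid.fun_pow 2)
  have hp' : HasDerivAt (fun t => (1 + t) ^ 2) (2 * (1 + t)) t := by
    simpa using (hid.const_add 1).fun_pow 2
  have hlog := (hq'.fun_div hp' (pow_pos hp 2).ne').log (div_pos hq (pow_pos hp 2)).ne'
  have harctan := (((hid.const_mul 2).add_const 1).div_const √3).arctan
  have hrat₁ := (hasDerivAt_const t 1).fun_div (hq'.const_mul 24) (by positivity)
  have hrat₂ := (hid.sub_const 1).fun_div ((hq'.fun_pow 2).const_mul 72)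
    (by positivity)
  refine (((hlog.div_const 24).sub (harctan.const_mul (√3 / 36))).sub hrat₁ |>.add hrat₂)
    |>.congr_deriv ?_
  have h3 : √3 ^ 2 = 3 := sq_sqrt (by norm_num)
  field_simp
  rw [h3]
  ring

lemma tendsto_outerPrimitive : Tendsto outerPrimitive atTop (𝓝 (-(√3 * π) / 72)) := by
  -- `g t⁻¹` is `outerPrimitive t` without its arctan term.
  set g : ℝ → ℝ := fun s => log ((1 + s + s ^ 2) / (1 + s) ^ 2) / 24
    - s ^ 2 / (24 * (1 + s + s ^ 2)) + s ^ 3 * (1 - s) / (72 * (1 + s + s ^ 2) ^ 2)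
  have hg : ContinuousAt g 0 := by
    fun_prop (disch := norm_num)
  have hg0 : g 0 = 0 := by simp [g]
  have hwithoutArctan : Tendsto (fun t => outerPrimitive t + √3 / 36 * arctan ((2 * t + 1) / √3))
      atTop (𝓝 0) := by
    refine hg0 ▸ tendsto_atTop_of_eq_comp_inv hg fun t ht => ?_
    have hratio : (1 + t + t ^ 2) / (1 + t) ^ 2 = (1 + t⁻¹ + t⁻¹ ^ 2) / (1 + t⁻¹) ^ 2 := by
      field_simp
      ring
    simp only [outerPrimitive, g, hratio]
    field_simp
    ring
  have harctan : Tendsto (fun t => √3 / 36 * arctan ((2 * t + 1) / √3)) atTop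
      (𝓝 (√3 / 36 * (π / 2))) :=
    ((tendsto_arctan_atTop.mono_right nhdsWithin_le_nhds).comp
      (tendsto_atTop_add_const_right _ 1 (tendsto_id.const_mul_atTop (two_pos : (0 : ℝ) < 2))
        |>.atTop_div_const (by positivity))).const_mul _
  convert hwithoutArctan.sub harctan using 2 <;> ring

lemma hasDerivAt_outerPrimitive_sq (x : ℝ) :
    HasDerivAt (fun x => outerPrimitive (x ^ 2))
      (x ^ 3 / (6 * (1 + x ^ 2) * (1 + x ^ 2 + x ^ 4) ^ 3)) x := by
  refine HasDerivAt.comp (h := fun x => x ^ 2) x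
    (hasDerivAt_outerPrimitive (neg_one_lt_zero.trans_le (sq_nonneg x))) (hasDerivAt_pow 2 x)
    |>.congr_deriv ?_
  field_simp
  ring

lemma outerPrimitive_zero : outerPrimitive 0 = -(√3 * π) / 216 - 1 / 18 := by
  norm_num [outerPrimitive, arctan_inv_sqrt_three]
  ring

theorem quadrant_integral_14 :
    ∫ x in Set.Ioi (0:ℝ), ∫ y in Set.Ioi (0:ℝ), x ^ 3 * y / (1 + x ^ 2 + y ^ 2 + x ^ 2 * y ^ 2 + x ^ 4) ^ 4 = (6 - Real.sqrt 3 * Real.pi) / 108 := by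
  have inner (x : ℝ) (_ : x ∈ Ioi 0) :
      ∫ y in Ioi 0, x ^ 3 * y / (1 + x ^ 2 + y ^ 2 + x ^ 2 * y ^ 2 + x ^ 4) ^ 4
        = x ^ 3 / (6 * (1 + x ^ 2) * (1 + x ^ 2 + x ^ 4) ^ 3) := by
    have hden (y : ℝ) : 1 + x ^ 2 + y ^ 2 + x ^ 2 * y ^ 2 + x ^ 4
        = (1 + x ^ 2) * y ^ 2 + (1 + x ^ 2 + x ^ 4) := by ring
    simp_rw [hden, mul_div_assoc]
    rw [integral_const_mul, integral_Ioi_mul_div_sq_add_pow (by positivity) (by positivity)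
      three_ne_zero]
    field_simp
    norm_num
    ring
  calc _ = ∫ x in Ioi 0, x ^ 3 / (6 * (1 + x ^ 2) * (1 + x ^ 2 + x ^ 4) ^ 3) :=
        setIntegral_congr_fun measurableSet_Ioi inner
    _ = -(√3 * π) / 72 - outerPrimitive (0 ^ 2) :=
        integral_Ioi_of_hasDerivAt_of_nonneg' (fun x _ => hasDerivAt_outerPrimitive_sq x)
          (fun x (hx : 0 < x) => by positivity)
          (tendsto_outerPrimitive.comp (tendsto_pow_atTop two_ne_zero))
    _ = _ := by rw [zero_pow two_ne_zero, outerPrimitive_zero]; ring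
end

section
/- ∫_0^∞ ∫_0^∞ x⁵ y / (1 + x² + y² + x² y² + x⁴)^4 dx dy = (−9 + 2√3 π)/648. -/
/-!
The denominator is `(1 + x²) y² + (1 + x² + x⁴)`, so the inner integral is elementary and equals
`x⁵ / (6 (1 + x²) (1 + x² + x⁴)³)`. The substitution `t = x²` turns the outer integral into
`(1/12) ∫₀^∞ t² / ((1 + t) (1 + t + t²)³) dt`, which partial fractions evaluate through a primitive
made of logarithms, rational terms and `arctan ((2t + 1) / √3)`.
-/

open MeasureTheory Real Set Filter Topology

theorem integral_Ioi_smul_comp_sq {E : Type*} [NormedAddCommGroup E] [NormedSpace ℝ E]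
    (g : ℝ → E) : ∫ x in Ioi 0, x • g (x ^ 2) = (1 / 2 : ℝ) • ∫ t in Ioi 0, g t := by
  have h := integral_comp_rpow_Ioi_of_pos (g := g) two_pos
  norm_num [rpow_two, mul_smul, integral_smul] at h
  rw [← h, smul_smul]
  norm_num

theorem integral_Ioi_div_mul_sq_add_pow {a b : ℝ} (ha : 0 < a) (hb : 0 < b) {n : ℕ}
    (hn : n ≠ 0) : ∫ y in Ioi 0, y / (a * y ^ 2 + b) ^ (n + 1) = 1 / (2 * a * n * b ^ n) := by
  obtain ⟨m, rfl⟩ := Nat.exists_eq_succ_of_ne_zero hn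
  have hq : ∀ y : ℝ, 0 < a * y ^ 2 + b := fun y => by positivity
  have hderiv : ∀ y ∈ Ici (0 : ℝ),
      HasDerivAt (fun y => -(2 * a * ↑(m + 1) * (a * y ^ 2 + b) ^ (m + 1))⁻¹)
        (y / (a * y ^ 2 + b) ^ (m + 1 + 1)) y := by
    intro y _
    have hsq : HasDerivAt (fun y : ℝ => a * y ^ 2 + b) (a * (2 * y)) y := by
      simpa using ((hasDerivAt_pow 2 y).const_mul a).add_const b
    have h := (((hsq.pow (m + 1)).const_mul (2 * a * ↑(m + 1))).inv
      (by have := hq y; simp only [Pi.pow_apply]; positivity)).neg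
    refine h.congr_deriv ?_
    have := hq y
    simp only [Pi.pow_apply, Nat.add_sub_cancel]
    field_simp
    ring
  have hnonneg : ∀ y ∈ Ioi (0 : ℝ), 0 ≤ y / (a * y ^ 2 + b) ^ (m + 1 + 1) :=
    fun y hy => div_nonneg (le_of_lt hy) (pow_pos (hq y) _).le
  have hlim :
      Tendsto (fun y => -(2 * a * ↑(m + 1) * (a * y ^ 2 + b) ^ (m + 1))⁻¹) atTop (𝓝 0) := by
    rw [← neg_zero]
    refine (Tendsto.inv_tendsto_atTop (Tendsto.const_mul_atTop (by positivity) ?_)).neg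
    exact (tendsto_pow_atTop hn).comp <| tendsto_atTop_add_const_right _ b <|
      (tendsto_pow_atTop two_ne_zero).const_mul_atTop ha
  rw [integral_Ioi_of_hasDerivAt_of_nonneg' hderiv hnonneg hlim]
  simp

theorem integral_Ioi_quadrant_inner (x : ℝ) :
    ∫ y in Ioi 0, x ^ 5 * y / (1 + x ^ 2 + y ^ 2 + x ^ 2 * y ^ 2 + x ^ 4) ^ 4 =
      x • (6⁻¹ * ((x ^ 2) ^ 2 / ((1 + x ^ 2) * (1 + x ^ 2 + (x ^ 2) ^ 2) ^ 3))) := by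
  have h := integral_Ioi_div_mul_sq_add_pow (a := 1 + x ^ 2) (b := 1 + x ^ 2 + x ^ 4)
    (by positivity) (by positivity) (n := 3) (by norm_num)
  calc ∫ y in Ioi 0, x ^ 5 * y / (1 + x ^ 2 + y ^ 2 + x ^ 2 * y ^ 2 + x ^ 4) ^ 4
      = ∫ y in Ioi 0, x ^ 5 * (y / ((1 + x ^ 2) * y ^ 2 + (1 + x ^ 2 + x ^ 4)) ^ (3 + 1)) := by
        congr 1; ext y; ring
    _ = x ^ 5 * (1 / (2 * (1 + x ^ 2) * 3 * (1 + x ^ 2 + x ^ 4) ^ 3)) := by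
        rw [integral_const_mul, h]; norm_num
    _ = _ := by rw [smul_eq_mul]; field_simp; ring

theorem one_add_add_sq_pos (t : ℝ) : 0 < 1 + t + t ^ 2 := by nlinarith [sq_nonneg (t + 1 / 2)]

noncomputable def quadrantPrimitive (t : ℝ) : ℝ :=
  log (1 + t) - log (1 + t + t ^ 2) / 2 + (1 - t) / (3 * (1 + t + t ^ 2))
    - (2 * t + 1) / (6 * (1 + t + t ^ 2) ^ 2) + √3 / 9 * arctan ((2 * t + 1) / √3)

theorem hasDerivAt_quadrantPrimitive {t : ℝ} (ht : -1 < t) :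
    HasDerivAt quadrantPrimitive (t ^ 2 / ((1 + t) * (1 + t + t ^ 2) ^ 3)) t := by
  have hp : 0 < 1 + t := by linarith
  have hq := one_add_add_sq_pos t
  have hP : HasDerivAt (fun t : ℝ => 1 + t) 1 t := (hasDerivAt_id' t).const_add 1
  have hQ : HasDerivAt (fun t : ℝ => 1 + t + t ^ 2) (1 + 2 * t) t :=
    (hP.add (hasDerivAt_pow 2 t)).congr_deriv (by ring)
  have hL : HasDerivAt (fun t : ℝ => 2 * t + 1) 2 t := by
    simpa using ((hasDerivAt_id' t).const_mul 2).add_const 1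
  have h := ((((hP.log hp.ne').sub ((hQ.log hq.ne').div_const 2)).add
    (((hasDerivAt_id' t).const_sub 1).div (hQ.const_mul 3) (by positivity))).sub
    (hL.div ((hQ.pow 2).const_mul 6) (by simp only [Pi.pow_apply]; positivity))).add
    (((hL.div_const √3).arctan).const_mul (√3 / 9))
  refine h.congr_deriv ?_
  have h3 : √3 ^ 2 = 3 := sq_sqrt (by norm_num)
  simp only [Pi.pow_apply]
  field_simp
  rw [h3]
  ring

theorem tendsto_inv_one_add_add_sq_atTop :
    Tendsto (fun t : ℝ => (1 + t + t ^ 2)⁻¹) atTop (𝓝 0) :=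
  tendsto_inv_atTop_zero.comp <|
    tendsto_atTop_mono (fun t => by dsimp only [id]; nlinarith [sq_nonneg t]) tendsto_id

theorem tendsto_div_one_add_add_sq_atTop :
    Tendsto (fun t : ℝ => t / (1 + t + t ^ 2)) atTop (𝓝 0) := by
  refine squeeze_zero' (eventually_ge_atTop 0 |>.mono fun t ht => by positivity)
    (eventually_gt_atTop 0 |>.mono fun t ht => ?_) tendsto_inv_atTop_zero
  rw [div_le_iff₀ (one_add_add_sq_pos t)]
  field_simp
  nlinarith

theorem tendsto_quadrantPrimitive_atTop :
    Tendsto quadrantPrimitive atTop (𝓝 (√3 * π / 18)) := by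
  set r : ℝ → ℝ := fun t => t / (1 + t + t ^ 2)
  set s : ℝ → ℝ := fun t => (1 + t + t ^ 2)⁻¹
  have hr : Tendsto r atTop (𝓝 0) := tendsto_div_one_add_add_sq_atTop
  have hs : Tendsto s atTop (𝓝 0) := tendsto_inv_one_add_add_sq_atTop
  have harctan : Tendsto (fun t : ℝ => arctan ((2 * t + 1) / √3)) atTop (𝓝 (π / 2)) :=
    (tendsto_arctan_atTop.mono_right nhdsWithin_le_nhds).comp <|
      (tendsto_atTop_add_const_right _ 1 (tendsto_id.const_mul_atTop two_pos)).atTop_div_const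
        (by positivity)
  -- Each term is continuous in `r t` and `s t`, which both tend to `0`.
  have hform : ∀ t > 0, quadrantPrimitive t = log (1 + r t) / 2 + (s t - r t) / 3
      - (2 * r t + s t) * s t / 6 + √3 / 9 * arctan ((2 * t + 1) / √3) := by
    intro t ht
    have hq := one_add_add_sq_pos t
    have hlog : log (1 + t) - log (1 + t + t ^ 2) / 2 = log (1 + r t) / 2 := by
      rw [show 1 + r t = (1 + t) ^ 2 / (1 + t + t ^ 2) by simp only [r]; field_simp; ring,
        log_div (by positivity) hq.ne', log_pow]
      push_cast; ring
    rw [quadrantPrimitive, hlog]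
    simp only [r, s]
    field_simp
  have hlim := ((((hr.const_add 1).log (by norm_num)).div_const 2).add ((hs.sub hr).div_const 3)
    |>.sub ((((hr.const_mul 2).add hs).mul hs).div_const 6)).add (harctan.const_mul (√3 / 9))
  rw [show log (1 + 0) / 2 + (0 - 0) / 3 - (2 * 0 + 0) * 0 / 6 + √3 / 9 * (π / 2) = √3 * π / 18 by
    simp; ring] at hlim
  exact hlim.congr' (eventually_gt_atTop 0 |>.mono fun t ht => (hform t ht).symm)

theorem quadrantPrimitive_zero : quadrantPrimitive 0 = 1 / 6 + √3 * π / 54 := by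
  rw [quadrantPrimitive]
  norm_num [arctan_inv_sqrt_three]
  ring

theorem integral_Ioi_sq_div_one_add_mul_one_add_add_sq_pow_three :
    ∫ t in Ioi 0, t ^ 2 / ((1 + t) * (1 + t + t ^ 2) ^ 3) = (-9 + 2 * √3 * π) / 54 := by
  have hnonneg : ∀ t ∈ Ioi (0 : ℝ), 0 ≤ t ^ 2 / ((1 + t) * (1 + t + t ^ 2) ^ 3) := fun t ht => by
    have := one_add_add_sq_pos t
    have : 0 < t := ht
    positivity
  rw [integral_Ioi_of_hasDerivAt_of_nonneg' (fun t ht => hasDerivAt_quadrantPrimitive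
    (by linarith [mem_Ici.1 ht])) hnonneg tendsto_quadrantPrimitive_atTop, quadrantPrimitive_zero]
  ring

theorem quadrant_integral_16 :
    ∫ x in Set.Ioi (0:ℝ), ∫ y in Set.Ioi (0:ℝ), x ^ 5 * y / (1 + x ^ 2 + y ^ 2 + x ^ 2 * y ^ 2 + x ^ 4) ^ 4 = (-9 + 2 * Real.sqrt 3 * Real.pi) / 648 := by
  simp_rw [integral_Ioi_quadrant_inner]
  rw [integral_Ioi_smul_comp_sq fun t => 6⁻¹ * (t ^ 2 / ((1 + t) * (1 + t + t ^ 2) ^ 3)),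
    integral_const_mul,
    integral_Ioi_sq_div_one_add_mul_one_add_add_sq_pow_three, smul_eq_mul]
  ring
end
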